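/- For every nonnegative integer n, the sum over all pairs of nonnegative integers (i, j) with i + j = n of B_{2i} · B_{2j}, minus the sum over all pairs of nonnegative integers (i, j) with i + j = n and j ≥ 1 of B_{2i+1} · B_{2j−1}, equals 4^n · B_n. -/

import Mathlib

/-!
Let `C(x) = ∑ B_m xᵐ`. The recursion `(m + 1) B_{m+1} = 2 (2m + 1) B_m` says `(1 - 4x) C' = 2C`,
so `(1 - 4x) C²` has derivative zero and equals its constant term `1`. Hence `C(x) C(-x)` and
`C(4x²)` both square to the inverse of `(1 - 4x)(1 + 4x) = 1 - 16x²`; as both have constant term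
`1` and `ℤ⟦X⟧` is a domain, they are equal. Comparing coefficients of `x^{2n}`, and splitting the
convolution on the left according to the parity of the indices, gives the identity.
-/

open Finset PowerSeries

theorem Finset.Nat.sum_antidiagonal_two_mul {M : Type*} [AddCommMonoid M] (f : ℕ → ℕ → M)
    (n : ℕ) :
    ∑ p ∈ antidiagonal (2 * n), f p.1 p.2 =
      ∑ p ∈ antidiagonal n, f (2 * p.1) (2 * p.2) +
        ∑ p ∈ antidiagonal n with 1 ≤ p.2, f (2 * p.1 + 1) (2 * p.2 - 1) := by
  induction n generalizing f with
  | zero => simp [sum_filter]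
  | succ n ih =>
    rw [show 2 * (n + 1) = 2 * n + 1 + 1 by ring, Nat.sum_antidiagonal_succ,
      Nat.sum_antidiagonal_succ]
    dsimp only
    rw [ih fun k l => f (k + 1 + 1) l, sum_filter, sum_filter, Nat.sum_antidiagonal_succ,
      Nat.sum_antidiagonal_succ, if_pos (Nat.le_add_left 1 _)]
    simp only [mul_add, mul_one, mul_zero, zero_add, add_assoc, Nat.reduceAdd]
    rw [show 2 * n + 2 - 1 = 2 * n + 1 by omega]
    abel

noncomputable def centralBinomSeries : ℤ⟦X⟧ := mk fun n => (n.centralBinom : ℤ)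

local notation "𝒞" => centralBinomSeries

theorem coeff_centralBinomSeries (n : ℕ) : coeff n 𝒞 = n.centralBinom := coeff_mk _ _

theorem constantCoeff_centralBinomSeries : constantCoeff 𝒞 = 1 := by
  simp [centralBinomSeries]

theorem constantCoeff_rescale_centralBinomSeries (a : ℤ) : constantCoeff (rescale a 𝒞) = 1 := by
  rw [← coeff_zero_eq_constantCoeff_apply, coeff_rescale, coeff_zero_eq_constantCoeff_apply,
    constantCoeff_centralBinomSeries, pow_zero, one_mul]

theorem one_sub_four_X_mul_derivative_centralBinomSeries :
    (1 - 4 * X) * d⁄dX ℤ 𝒞 = 2 * 𝒞 := by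
  ext n
  rw [← map_ofNat C 4, ← map_ofNat C 2, sub_mul, one_mul, mul_assoc, map_sub, coeff_C_mul,
    coeff_C_mul, coeff_derivative, coeff_centralBinomSeries, coeff_centralBinomSeries]
  have hrec := congrArg (Nat.cast : ℕ → ℤ) (Nat.succ_mul_centralBinom_succ n)
  push_cast at hrec
  rcases n with _ | n
  · simp [Nat.centralBinom]
  · rw [coeff_succ_X_mul, coeff_derivative, coeff_centralBinomSeries]
    push_cast at hrec ⊢
    linear_combination hrec

theorem one_sub_four_X_mul_centralBinomSeries_sq : (1 - 4 * X) * 𝒞 ^ 2 = 1 := by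
  refine derivative.ext ?_ (by simp [constantCoeff_centralBinomSeries])
  have h4 : d⁄dX ℤ (1 - 4 * X : ℤ⟦X⟧) = -4 := by
    rw [map_sub, derivative_one, ← map_ofNat C 4, Derivation.leibniz, derivative_C, derivative_X]
    simp
  rw [Derivation.leibniz, derivative_pow, derivative_one, h4, smul_eq_mul, smul_eq_mul]
  linear_combination (2 * 𝒞) * one_sub_four_X_mul_derivative_centralBinomSeries

theorem centralBinomSeries_mul_rescale_neg_one :
    𝒞 * rescale (-1) 𝒞 = expand 2 two_ne_zero (rescale 4 𝒞) := by
  set E := expand 2 two_ne_zero (rescale 4 𝒞)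
  have hminus := one_sub_four_X_mul_centralBinomSeries_sq
  have hplus : (1 + 4 * X) * rescale (-1) 𝒞 ^ 2 = 1 := by
    simpa [rescale_X, map_ofNat] using congrArg (rescale (-1)) hminus
  have hE : (1 - 16 * X ^ 2) * E ^ 2 = 1 := by
    have := congrArg (expand 2 two_ne_zero ∘ rescale 4) hminus
    simp only [Function.comp_apply, map_sub, map_one, map_mul, map_pow, map_ofNat, rescale_X,
      expand_X] at this
    linear_combination this
  have hsq : (𝒞 * rescale (-1) 𝒞) ^ 2 = E ^ 2 :=
    left_inv_eq_right_inv
      (by linear_combination (1 + 4 * X) * rescale (-1) 𝒞 ^ 2 * hminus + hplus) hE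
  refine (sq_eq_sq_iff_eq_or_eq_neg.mp hsq).resolve_right fun h => ?_
  have h0 := congrArg constantCoeff h
  rw [map_mul, map_neg, constantCoeff_expand, constantCoeff_rescale_centralBinomSeries,
    constantCoeff_rescale_centralBinomSeries, constantCoeff_centralBinomSeries] at h0
  norm_num at h0

/-- For every nonnegative integer `n`,
`∑_{i+j=n} B_{2i} B_{2j} − ∑_{i+j=n, j≥1} B_{2i+1} B_{2j−1} = 4^n B_n`. -/
theorem alternating_centralBinom_convolution (n : ℕ) :
    (∑ ij ∈ Finset.HasAntidiagonal.antidiagonal n,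
        (Nat.centralBinom (2 * ij.1) * Nat.centralBinom (2 * ij.2) : ℤ)) -
      ∑ ij ∈ (Finset.HasAntidiagonal.antidiagonal n).filter (fun ij => 1 ≤ ij.2),
        (Nat.centralBinom (2 * ij.1 + 1) * Nat.centralBinom (2 * ij.2 - 1) : ℤ) =
      4 ^ n * Nat.centralBinom n := by
  have h := congrArg (coeff (2 * n)) centralBinomSeries_mul_rescale_neg_one
  rw [coeff_mul,
    Finset.Nat.sum_antidiagonal_two_mul fun k l => coeff k 𝒞 * coeff l (rescale (-1) 𝒞),
    coeff_expand_mul, coeff_rescale, coeff_centralBinomSeries] at h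
  simp only [coeff_rescale, coeff_centralBinomSeries] at h
  rw [← h, sub_eq_add_neg, ← sum_neg_distrib]
  congr 1
  · refine sum_congr rfl fun p _ => ?_
    rw [pow_mul, neg_one_sq, one_pow, one_mul]
  · refine sum_congr rfl fun p hp => ?_
    have hj : 1 ≤ p.2 := (mem_filter.mp hp).2
    rw [Odd.neg_one_pow ⟨p.2 - 1, by omega⟩]
    ring
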